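/- Fix a ∈ Fin 2 and c ∈ Fin K and assume μ{Y = y, A = a, C = c} > 0 for every y ∈ Fin N. Let s_y = μ{Y = y, A = a, C = c} / μ{A = a, C = c}, and for each θ ∈ ℝ^N_{≥0} let h_θ be a chosen derived predictor (one satisfying θ_{h_θ(x,a,c)} · r_{h_θ(x,a,c)}(x) = max_y θ_y · r_y(x) for every x with μ{X = x, A = a, C = c} > 0, where r_y(x) = μ{Y = y, X = x, A = a, C = c} / μ{X = x, A = a, C = c}). Then for every predictor h : 𝒳 × Fin 2 × Fin K → Fin N, the vector (TP_{ac}^1(h), …, TP_{ac}^N(h)) lies in the region under the ROC hypersurface D_{ac} := ⋂_{θ ∈ ℝ^N_{≥0}} { x ∈ [0,1]^N : Σ_y θ_y s_y x_y ≤ Σ_y θ_y s_y TP_{ac}^y(h_θ) }. -/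
import Mathlib


open scoped Classical
open Finset

/-- Probability of an event under a finite mass function `μ`. -/
noncomputable def pr {Ω : Type*} [Fintype Ω] (μ : Ω → ℝ) (P : Ω → Prop) : ℝ :=
  ∑ ω : Ω, if P ω then μ ω else 0

/-- `μ` is a probability mass function on the finite type `Ω`. -/
structure IsProbMass {Ω : Type*} [Fintype Ω] (μ : Ω → ℝ) : Prop where
  nonneg : ∀ ω, 0 ≤ μ ω
  total : ∑ ω : Ω, μ ω = 1

/-- True positive rate of the predictor `h` for class `y`, group `a` and client `c`:
`TP_{ac}^y(h) = μ{h(X,A,C) = y ∧ Y = y ∧ A = a ∧ C = c} / μ{Y = y ∧ A = a ∧ C = c}`. -/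
noncomputable def TP {Ω 𝒳 : Type*} [Fintype Ω] {K N : ℕ} (μ : Ω → ℝ)
    (X : Ω → 𝒳) (A : Ω → Fin 2) (C : Ω → Fin K) (Y : Ω → Fin N)
    (h : 𝒳 × Fin 2 × Fin K → Fin N) (y : Fin N) (a : Fin 2) (c : Fin K) : ℝ :=
  pr μ (fun ω => h (X ω, A ω, C ω) = y ∧ Y ω = y ∧ A ω = a ∧ C ω = c) /
    pr μ (fun ω => Y ω = y ∧ A ω = a ∧ C ω = c)

/-- Bayesian optimal score for group `a`, client `c`:
`r_y(x) = μ{Y = y ∧ X = x ∧ A = a ∧ C = c} / μ{X = x ∧ A = a ∧ C = c}`. -/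
noncomputable def score {Ω 𝒳 : Type*} [Fintype Ω] {K N : ℕ} (μ : Ω → ℝ)
    (X : Ω → 𝒳) (A : Ω → Fin 2) (C : Ω → Fin K) (Y : Ω → Fin N)
    (a : Fin 2) (c : Fin K) (y : Fin N) (x : 𝒳) : ℝ :=
  pr μ (fun ω => Y ω = y ∧ X ω = x ∧ A ω = a ∧ C ω = c) /
    pr μ (fun ω => X ω = x ∧ A ω = a ∧ C ω = c)

/-- `h` is a derived predictor for `(a, c)` and weight vector `θ`:
for every `x` in the support, `θ_{h(x,a,c)} ⬝ r_{h(x,a,c)}(x) = max_y θ_y ⬝ r_y(x)`. -/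
def IsDerivedPredictor {Ω 𝒳 : Type*} [Fintype Ω] {K N : ℕ} (μ : Ω → ℝ)
    (X : Ω → 𝒳) (A : Ω → Fin 2) (C : Ω → Fin K) (Y : Ω → Fin N)
    (a : Fin 2) (c : Fin K) (θ : Fin N → ℝ) (h : 𝒳 × Fin 2 × Fin K → Fin N) : Prop :=
  ∀ x : 𝒳, 0 < pr μ (fun ω => X ω = x ∧ A ω = a ∧ C ω = c) →
    IsGreatest (Set.range fun y => θ y * score μ X A C Y a c y x)
      (θ (h (x, a, c)) * score μ X A C Y a c (h (x, a, c)) x)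

/-- The region under the ROC hypersurface `D_{ac}`, where `hp θ` is the chosen derived
predictor for weight vector `θ`. -/
def RUS {Ω 𝒳 : Type*} [Fintype Ω] {K N : ℕ} (μ : Ω → ℝ)
    (X : Ω → 𝒳) (A : Ω → Fin 2) (C : Ω → Fin K) (Y : Ω → Fin N)
    (a : Fin 2) (c : Fin K)
    (hp : (Fin N → ℝ) → 𝒳 × Fin 2 × Fin K → Fin N) : Set (Fin N → ℝ) :=
  ⋂ θ ∈ {θ : Fin N → ℝ | ∀ y, 0 ≤ θ y},
    {v : Fin N → ℝ | (∀ y, v y ∈ Set.Icc (0 : ℝ) 1) ∧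
      ∑ y : Fin N, θ y * (pr μ (fun ω => Y ω = y ∧ A ω = a ∧ C ω = c) /
          pr μ (fun ω => A ω = a ∧ C ω = c)) * v y ≤
      ∑ y : Fin N, θ y * (pr μ (fun ω => Y ω = y ∧ A ω = a ∧ C ω = c) /
          pr μ (fun ω => A ω = a ∧ C ω = c)) * TP μ X A C Y (hp θ) y a c}

section Aux

variable {Ω : Type*} [Fintype Ω] (μ : Ω → ℝ)

lemma pr_nonneg' (hμ : ∀ ω, 0 ≤ μ ω) (P : Ω → Prop) : 0 ≤ pr μ P :=
  Finset.sum_nonneg fun ω _ => by by_cases hp : P ω <;> simp [hp, hμ ω]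

lemma pr_mono' (hμ : ∀ ω, 0 ≤ μ ω) {P Q : Ω → Prop} (h : ∀ ω, P ω → Q ω) :
    pr μ P ≤ pr μ Q :=
  Finset.sum_le_sum fun ω _ => by
    by_cases hp : P ω
    · simp [hp, h ω hp]
    · by_cases hq : Q ω <;> simp [hp, hq, hμ ω]

lemma pr_congr' {P Q : Ω → Prop} (h : ∀ ω, P ω ↔ Q ω) : pr μ P = pr μ Q := by
  unfold pr
  exact Finset.sum_congr rfl fun ω _ => by simp [h ω]

lemma pr_split' {𝒳 : Type*} [Fintype 𝒳] (X : Ω → 𝒳) (P : Ω → Prop) :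
    pr μ P = ∑ x : 𝒳, pr μ (fun ω => X ω = x ∧ P ω) := by
  unfold pr
  rw [Finset.sum_comm]
  refine Finset.sum_congr rfl fun ω _ => ?_
  by_cases hp : P ω <;> simp [hp]

end Aux

/-- for every predictor `h`, the vector of its true positive rates lies in
the region under the ROC hypersurface `D_{ac}`. -/
theorem true_positives_mem_region_under_ROC
    {Ω 𝒳 : Type*} [Fintype Ω] [Nonempty Ω] [Fintype 𝒳] {K N : ℕ}
    (hK : 0 < K) (hN : 0 < N)
    (μ : Ω → ℝ) (hμ : IsProbMass μ)
    (X : Ω → 𝒳) (A : Ω → Fin 2) (C : Ω → Fin K) (Y : Ω → Fin N)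
    (a : Fin 2) (c : Fin K)
    (hpos : ∀ y : Fin N, 0 < pr μ (fun ω => Y ω = y ∧ A ω = a ∧ C ω = c))
    (hp : (Fin N → ℝ) → 𝒳 × Fin 2 × Fin K → Fin N)
    (hderiv : ∀ θ : Fin N → ℝ, (∀ y, 0 ≤ θ y) →
      IsDerivedPredictor μ X A C Y a c θ (hp θ)) :
    ∀ h : 𝒳 × Fin 2 × Fin K → Fin N,
      (fun y => TP μ X A C Y h y a c) ∈ RUS μ X A C Y a c hp := by
  intro h
  refine Set.mem_iInter₂.mpr fun θ hθ => ?_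
  have hnn := hμ.nonneg
  have hD : 0 < pr μ (fun ω => A ω = a ∧ C ω = c) :=
    lt_of_lt_of_le (hpos ⟨0, hN⟩) (pr_mono' μ hnn fun ω hw => hw.2)
  constructor
  · intro y
    refine ⟨div_nonneg (pr_nonneg' μ hnn _) (hpos y).le, ?_⟩
    exact (div_le_one (hpos y)).mpr (pr_mono' μ hnn fun ω hw => hw.2)
  · -- the key reformulation of the weighted sum of TPs
    have key : ∀ g : 𝒳 × Fin 2 × Fin K → Fin N,
        ∑ y : Fin N, θ y * (pr μ (fun ω => Y ω = y ∧ A ω = a ∧ C ω = c) /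
            pr μ (fun ω => A ω = a ∧ C ω = c)) * TP μ X A C Y g y a c
        = (∑ x : 𝒳, θ (g (x, a, c)) *
            pr μ (fun ω => Y ω = g (x, a, c) ∧ X ω = x ∧ A ω = a ∧ C ω = c)) /
          pr μ (fun ω => A ω = a ∧ C ω = c) := by
      intro g
      have step1 : ∀ y : Fin N,
          θ y * (pr μ (fun ω => Y ω = y ∧ A ω = a ∧ C ω = c) /
            pr μ (fun ω => A ω = a ∧ C ω = c)) * TP μ X A C Y g y a c
          = θ y * pr μ (fun ω => g (X ω, A ω, C ω) = y ∧ Y ω = y ∧ A ω = a ∧ C ω = c) /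
            pr μ (fun ω => A ω = a ∧ C ω = c) := by
        intro y
        rw [TP]
        have h1 := (hpos y).ne'
        have h2 := hD.ne'
        field_simp
      rw [Finset.sum_congr rfl fun y _ => step1 y, ← Finset.sum_div]
      congr 1
      have step2 : ∀ y : Fin N,
          pr μ (fun ω => g (X ω, A ω, C ω) = y ∧ Y ω = y ∧ A ω = a ∧ C ω = c)
          = ∑ x : 𝒳, if g (x, a, c) = y then
              pr μ (fun ω => Y ω = y ∧ X ω = x ∧ A ω = a ∧ C ω = c) else 0 := by
        intro y
        rw [pr_split' μ X]
        refine Finset.sum_congr rfl fun x _ => ?_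
        by_cases hg : g (x, a, c) = y
        · simp only [hg, if_true]
          refine pr_congr' μ fun ω => ?_
          constructor
          · rintro ⟨hx, _, hy, ha, hc⟩; exact ⟨hy, hx, ha, hc⟩
          · rintro ⟨hy, hx, ha, hc⟩
            exact ⟨hx, by rw [hx, ha, hc, hg], hy, ha, hc⟩
        · simp only [hg, if_false]
          have : pr μ (fun ω => X ω = x ∧ g (X ω, A ω, C ω) = y ∧ Y ω = y ∧
              A ω = a ∧ C ω = c) ≤ 0 := by
            have : pr μ (fun ω => X ω = x ∧ g (X ω, A ω, C ω) = y ∧ Y ω = y ∧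
                A ω = a ∧ C ω = c) = pr μ (fun _ => False) := by
              refine pr_congr' μ fun ω => ?_
              constructor
              · rintro ⟨hx, hgy, _, ha, hc⟩
                exact hg (by rwa [hx, ha, hc] at hgy)
              · intro hf; exact hf.elim
            rw [this]; simp [pr]
          linarith [pr_nonneg' μ hnn (fun ω => X ω = x ∧ g (X ω, A ω, C ω) = y ∧
            Y ω = y ∧ A ω = a ∧ C ω = c)]
      calc ∑ y : Fin N, θ y *
              pr μ (fun ω => g (X ω, A ω, C ω) = y ∧ Y ω = y ∧ A ω = a ∧ C ω = c)
          = ∑ y : Fin N, ∑ x : 𝒳, if g (x, a, c) = y then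
              θ y * pr μ (fun ω => Y ω = y ∧ X ω = x ∧ A ω = a ∧ C ω = c) else 0 := by
            refine Finset.sum_congr rfl fun y _ => ?_
            rw [step2 y, Finset.mul_sum]
            refine Finset.sum_congr rfl fun x _ => ?_
            split <;> simp
        _ = ∑ x : 𝒳, ∑ y : Fin N, if g (x, a, c) = y then
              θ y * pr μ (fun ω => Y ω = y ∧ X ω = x ∧ A ω = a ∧ C ω = c) else 0 :=
            Finset.sum_comm
        _ = ∑ x : 𝒳, θ (g (x, a, c)) *
              pr μ (fun ω => Y ω = g (x, a, c) ∧ X ω = x ∧ A ω = a ∧ C ω = c) := by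
            refine Finset.sum_congr rfl fun x _ => ?_
            simp [Finset.sum_ite_eq]
    -- pointwise comparison over x
    have hx : ∀ x : 𝒳,
        θ (h (x, a, c)) * pr μ (fun ω => Y ω = h (x, a, c) ∧ X ω = x ∧ A ω = a ∧ C ω = c)
        ≤ θ (hp θ (x, a, c)) *
          pr μ (fun ω => Y ω = hp θ (x, a, c) ∧ X ω = x ∧ A ω = a ∧ C ω = c) := by
      intro x
      by_cases hq : 0 < pr μ (fun ω => X ω = x ∧ A ω = a ∧ C ω = c)
      · have hg := (hderiv θ hθ x hq).2 ⟨h (x, a, c), rfl⟩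
        have hs : ∀ y : Fin N,
            pr μ (fun ω => Y ω = y ∧ X ω = x ∧ A ω = a ∧ C ω = c)
            = score μ X A C Y a c y x * pr μ (fun ω => X ω = x ∧ A ω = a ∧ C ω = c) := by
          intro y
          rw [score, div_mul_cancel₀ _ hq.ne']
        rw [hs, hs, ← mul_assoc, ← mul_assoc]
        exact mul_le_mul_of_nonneg_right hg hq.le
      · have hq0 : pr μ (fun ω => X ω = x ∧ A ω = a ∧ C ω = c) = 0 :=
          le_antisymm (not_lt.mp hq) (pr_nonneg' μ hnn _)
        have hz : ∀ y : Fin N,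
            pr μ (fun ω => Y ω = y ∧ X ω = x ∧ A ω = a ∧ C ω = c) = 0 := fun y =>
          le_antisymm (hq0 ▸ pr_mono' μ hnn fun ω hw => hw.2)
            (pr_nonneg' μ hnn _)
        rw [hz, hz]; simp
    simp only []
    rw [key h, key (hp θ)]
    exact (div_le_div_iff_of_pos_right hD).mpr (Finset.sum_le_sum fun x _ => hx x)
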